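/- (Corollary 1(a).) Under the learning setup, assume additionally that k_i ≤ n for every agent i. If erf(ε·√((ρ + ρ̄·n)/2)) < (1 − ε̄)·(1 − δ), then (ε, ε̄, δ)-learning does not occur; in fact P({ω : (1/n)·|{i : ω ∉ A_i}| ≥ ε̄}) > δ. -/

import Mathlib

open MeasureTheory Filter
open scoped Classical

/-- The error function `erf x = (2/√π) ∫₀ˣ e^{-t²} dt`. -/
noncomputable def erf (x : ℝ) : ℝ :=
  (2 / Real.sqrt Real.pi) * ∫ t in (0:ℝ)..x, Real.exp (-t ^ 2)

/-!
Markov's inequality for the number of agents who are right: outside the event `B` that a fraction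
`ε̄` of the agents err, at least `n (1 - ε̄)` of them are right, so
`n (1 - ε̄) P(Bᶜ) ≤ ∑ P(Aᵢ) ≤ n erf(ε √((ρ + ρ̄ n)/2)) < n (1 - ε̄)(1 - δ)`,
the middle step because `erf` is increasing and `kᵢ ≤ n`.
-/

open Finset

lemma erf_mono : Monotone erf := by
  intro a b hab
  have hint (u v : ℝ) : IntervalIntegrable (fun t => Real.exp (-t ^ 2)) volume u v :=
    (by fun_prop : Continuous fun t : ℝ => Real.exp (-t ^ 2)).intervalIntegrable u v
  have hsplit := intervalIntegral.integral_add_adjacent_intervals (hint 0 a) (hint a b)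
  have hab_nonneg : 0 ≤ ∫ t in a..b, Real.exp (-t ^ 2) :=
    intervalIntegral.integral_nonneg hab fun t _ => (Real.exp_pos _).le
  unfold erf
  rw [← hsplit]
  gcongr
  linarith

lemma erf_nonneg {x : ℝ} (hx : 0 ≤ x) : 0 ≤ erf x := by
  simpa [erf] using erf_mono hx

lemma erf_mul_sqrt_le {ε ρ ρbar a b : ℝ} (hε : 0 ≤ ε) (hρbar : 0 ≤ ρbar) (hab : a ≤ b) :
    erf (ε * √((ρ + ρbar * a) / 2)) ≤ erf (ε * √((ρ + ρbar * b) / 2)) := by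
  apply erf_mono
  gcongr

lemma mul_measureReal_le_card_mem_le_sum {ι Ω : Type*} [Fintype ι] [MeasurableSpace Ω]
    (μ : Measure Ω) [IsFiniteMeasure μ] {A : ι → Set Ω} (hA : ∀ i, MeasurableSet (A i))
    (r : ℝ) : r * μ.real {ω | r ≤ #{i | ω ∈ A i}} ≤ ∑ i, μ.real (A i) := by
  have hcount (ω : Ω) : (#{i | ω ∈ A i} : ℝ) = ∑ i, (A i).indicator 1 ω := by
    simp [Set.indicator_apply, sum_boole]
  simp_rw [hcount, ← integral_indicator_one (μ := μ) (hA _)]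
  rw [← integral_finsetSum _ fun i _ => (integrable_const 1).indicator (hA i)]
  refine mul_meas_ge_le_integral_of_nonneg (ae_of_all _ fun ω => ?_) ?_ r
  · exact sum_nonneg fun i _ => Set.indicator_nonneg (fun _ _ => zero_le_one) ω
  · exact integrable_finsetSum _ fun i _ => (integrable_const 1).indicator (hA i)

lemma card_mul_one_sub_le_card_filter {ι : Type*} [Fintype ι] (p : ι → Prop) [DecidablePred p]
    {εbar : ℝ} (h : ¬ εbar ≤ (1 / Fintype.card ι : ℝ) * #{i | ¬ p i}) :
    Fintype.card ι * (1 - εbar) ≤ #{i | p i} := by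
  have hsplit : (#{i | p i} + #{i | ¬ p i} : ℝ) = Fintype.card ι := by
    exact_mod_cast card_filter_add_card_filter_not (s := univ) p
  rcases (Nat.cast_nonneg (Fintype.card ι) : (0:ℝ) ≤ _).eq_or_lt with hn | hn
  · rw [← hn]; simp
  · rw [not_le, one_div, inv_mul_lt_iff₀ hn] at h
    linarith

theorem stmt_3_general (n : ℕ) (hn : 1 ≤ n) (ε εbar δ ρ ρbar : ℝ)
    (hε : 0 < ε) (hεbar : εbar ∈ Set.Ioo (0:ℝ) 1) (hδ : δ ∈ Set.Ioo (0:ℝ) 1)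
    (hρbar : 0 < ρbar)
    (k : Fin n → ℕ) (hkn : ∀ i, k i ≤ n)
    {Ω : Type*} [MeasurableSpace Ω] (P : Measure Ω) [IsProbabilityMeasure P]
    (A : Fin n → Set Ω) (hmA : ∀ i, MeasurableSet (A i))
    (hPA : ∀ i, P (A i) = ENNReal.ofReal (erf (ε * Real.sqrt ((ρ + ρbar * k i) / 2))))
    (hcond : erf (ε * Real.sqrt ((ρ + ρbar * n) / 2)) < (1 - εbar) * (1 - δ)) :
    ENNReal.ofReal δ <
      P {ω | εbar ≤ (1 / n : ℝ) * ((Finset.univ.filter fun i => ω ∉ A i).card : ℝ)} := by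
  set c := erf (ε * √((ρ + ρbar * n) / 2))
  set B := {ω | εbar ≤ (1 / n : ℝ) * ((Finset.univ.filter fun i => ω ∉ A i).card : ℝ)}
  set r : ℝ := n * (1 - εbar)
  have hr : 0 < r := mul_pos (by exact_mod_cast hn) (sub_pos.2 hεbar.2)
  have hPAc (i : Fin n) : P.real (A i) ≤ c := by
    rw [measureReal_def, hPA, ENNReal.toReal_ofReal (erf_nonneg (by positivity))]
    exact erf_mul_sqrt_le hε.le hρbar.le (by exact_mod_cast hkn i)
  have hBc : Bᶜ ⊆ {ω | r ≤ #{i | ω ∈ A i}} := fun ω hω => by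
    simpa using card_mul_one_sub_le_card_filter (ω ∈ A ·) (by simpa [B] using hω)
  have hrBc : r * P.real Bᶜ < r * (1 - δ) := calc
    r * P.real Bᶜ ≤ r * P.real {ω | r ≤ #{i | ω ∈ A i}} := by gcongr; finiteness
    _ ≤ ∑ i, P.real (A i) := mul_measureReal_le_card_mem_le_sum P hmA r
    _ ≤ ∑ _i : Fin n, c := sum_le_sum fun i _ => hPAc i
    _ = n * c := by simp
    _ < r * (1 - δ) := by
      rw [mul_assoc]; exact mul_lt_mul_of_pos_left hcond (by exact_mod_cast hn)
  have hδB : δ < P.real B := by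
    have hcover := measureReal_union_le (μ := P) B Bᶜ
    rw [Set.union_compl_self, probReal_univ] at hcover
    linarith [lt_of_mul_lt_mul_left hrBc hr.le]
  exact (ENNReal.ofReal_lt_iff_lt_toReal hδ.1.le (measure_ne_top P B)).2 hδB

/-- Corollary 1(a): if `erf (ε √((ρ + ρ̄ n)/2)) < (1-ε̄)(1-δ)` and every agent
obtains at most `n` signals, then `(ε, ε̄, δ)`-learning fails:
the probability that at least a fraction `ε̄` of agents err exceeds `δ`. -/
theorem stmt_3 (n : ℕ) (hn : 1 ≤ n) (ε εbar δ ρ ρbar : ℝ)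
    (hε : 0 < ε) (hεbar : εbar ∈ Set.Ioo (0:ℝ) 1) (hδ : δ ∈ Set.Ioo (0:ℝ) 1)
    (hρ : 0 < ρ) (hρbar : 0 < ρbar)
    (k : Fin n → ℕ) (hk : ∀ i, 1 ≤ k i) (hkn : ∀ i, k i ≤ n)
    {Ω : Type*} [MeasurableSpace Ω] (P : Measure Ω) [IsProbabilityMeasure P]
    (A : Fin n → Set Ω) (hmA : ∀ i, MeasurableSet (A i))
    (hPA : ∀ i, P (A i) = ENNReal.ofReal (erf (ε * Real.sqrt ((ρ + ρbar * k i) / 2))))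
    (hcond : erf (ε * Real.sqrt ((ρ + ρbar * n) / 2)) < (1 - εbar) * (1 - δ)) :
    ENNReal.ofReal δ <
      P {ω | εbar ≤ (1 / n : ℝ) * ((Finset.univ.filter fun i => ω ∉ A i).card : ℝ)} :=
  stmt_3_general n hn ε εbar δ ρ ρbar hε hεbar hδ hρbar k hkn P A hmA hPA hcond
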